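/- arXiv:2603.01555 — 4 statements merged into one kernel-verified Lean document; each statement's English description precedes it below -/
import Mathlib

section
/- Let p ∈ [1,∞), let a < b, and let u : [a,b] → ℝ be absolutely continuous with u(a) = u(b) = 0 and u′ ∈ L^p(a,b). Then ‖u‖_{L^p(a,b)} ≤ (b−a) / p^{1/p} · ‖u′‖_{L^p(a,b)}. -/
/-!
Writing `u x = ∫ z in a..x, g z`, Jensen's inequality for `t ↦ t ^ p` on `[a, x]` gives
`|u x| ^ p ≤ (x - a) ^ (p - 1) * ∫ z in a..b, |g z| ^ p`; integrating this in `x` over `[a, b]`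
gives `∫ x in a..b, |u x| ^ p ≤ (b - a) ^ p / p * ∫ z in a..b, |g z| ^ p`.
-/

open MeasureTheory Set

theorem rpow_setIntegral_norm_le {α E : Type*} [MeasurableSpace α] [NormedAddCommGroup E]
    {μ : Measure α} {s : Set α} {f : α → E} {p : ℝ} (hp : 1 ≤ p) (hs₀ : μ s ≠ 0) (hs : μ s ≠ ⊤)
    (hf : IntegrableOn f s μ) (hfp : IntegrableOn (fun x ↦ ‖f x‖ ^ p) s μ) :
    (∫ x in s, ‖f x‖ ∂μ) ^ p ≤ μ.real s ^ (p - 1) * ∫ x in s, ‖f x‖ ^ p ∂μ := by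
  have jensen := (convexOn_rpow hp).map_set_average_le
    (continuousOn_id.rpow_const fun _ _ ↦ Or.inr (by linarith)) isClosed_Ici hs₀ hs
    (ae_of_all _ fun x ↦ norm_nonneg (f x)) hf.norm hfp
  have hc : 0 < μ.real s := ENNReal.toReal_pos hs₀ hs
  have hI : 0 ≤ ∫ x in s, ‖f x‖ ∂μ := integral_nonneg fun x ↦ norm_nonneg _
  simp only [setAverage_eq, smul_eq_mul] at jensen
  rw [Real.mul_rpow (inv_nonneg.2 hc.le) hI, Real.inv_rpow hc.le] at jensen
  calc (∫ x in s, ‖f x‖ ∂μ) ^ p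
      = μ.real s ^ p * ((μ.real s ^ p)⁻¹ * (∫ x in s, ‖f x‖ ∂μ) ^ p) := by
        field_simp
    _ ≤ μ.real s ^ p * ((μ.real s)⁻¹ * ∫ x in s, ‖f x‖ ^ p ∂μ) := by gcongr
    _ = μ.real s ^ (p - 1) * ∫ x in s, ‖f x‖ ^ p ∂μ := by
        rw [Real.rpow_sub_one hc.ne']; ring

theorem abs_intervalIntegral_rpow_le {g : ℝ → ℝ} {a x p : ℝ} (hp : 1 ≤ p) (hax : a ≤ x)
    (hg : IntervalIntegrable g volume a x)
    (hgp : IntervalIntegrable (fun z ↦ |g z| ^ p) volume a x) :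
    |∫ z in a..x, g z| ^ p ≤ (x - a) ^ (p - 1) * ∫ z in a..x, |g z| ^ p := by
  rcases hax.eq_or_lt with rfl | hax
  · simp [(zero_lt_one.trans_le hp).ne']
  calc |∫ z in a..x, g z| ^ p ≤ (∫ z in a..x, |g z|) ^ p := by
        gcongr
        exact intervalIntegral.abs_integral_le_integral_abs hax.le
    _ = (∫ z in Ioc a x, ‖g z‖) ^ p := by rw [intervalIntegral.integral_of_le hax.le]; rfl
    _ ≤ volume.real (Ioc a x) ^ (p - 1) * ∫ z in Ioc a x, ‖g z‖ ^ p :=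
        rpow_setIntegral_norm_le hp (by simp [hax]) (by simp) hg.1 hgp.1
    _ = (x - a) ^ (p - 1) * ∫ z in a..x, |g z| ^ p := by
        rw [Real.volume_real_Ioc_of_le hax.le, intervalIntegral.integral_of_le hax.le]; rfl

theorem integral_sub_rpow_sub_one {a b p : ℝ} (hp : 0 < p) :
    ∫ x in a..b, (x - a) ^ (p - 1) = (b - a) ^ p / p := by
  rw [intervalIntegral.integral_comp_sub_right (· ^ (p - 1)),
    integral_rpow (Or.inl (by linarith)), sub_add_cancel, sub_self, Real.zero_rpow hp.ne', sub_zero]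

theorem integral_abs_primitive_rpow_le {g : ℝ → ℝ} {a b p : ℝ} (hp : 1 ≤ p) (hab : a ≤ b)
    (hg : IntervalIntegrable g volume a b)
    (hgp : IntervalIntegrable (fun z ↦ |g z| ^ p) volume a b) :
    ∫ x in a..b, |∫ z in a..x, g z| ^ p ≤ (b - a) ^ p / p * ∫ z in a..b, |g z| ^ p := by
  have hp₀ : 0 < p := zero_lt_one.trans_le hp
  have pointwise : ∀ x ∈ Icc a b,
      |∫ z in a..x, g z| ^ p ≤ (x - a) ^ (p - 1) * ∫ z in a..b, |g z| ^ p := by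
    intro x hx
    have hsub : uIcc a x ⊆ uIcc a b := uIcc_subset_uIcc_left (by rwa [uIcc_of_le hab])
    refine (abs_intervalIntegral_rpow_le hp hx.1 (hg.mono_set hsub) (hgp.mono_set hsub)).trans
      (mul_le_mul_of_nonneg_left ?_ (Real.rpow_nonneg (sub_nonneg.2 hx.1) _))
    exact intervalIntegral.integral_mono_interval le_rfl hx.1 hx.2
      (ae_of_all _ fun z ↦ by positivity) hgp
  have hprim : ContinuousOn (fun x ↦ ∫ z in a..x, g z) (uIcc a b) :=
    intervalIntegral.continuousOn_primitive_interval' hg left_mem_uIcc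
  have hlhs : IntervalIntegrable (fun x ↦ |∫ z in a..x, g z| ^ p) volume a b :=
    (hprim.abs.rpow_const fun _ _ ↦ Or.inr hp₀.le).intervalIntegrable
  have hrhs : IntervalIntegrable (fun x ↦ (x - a) ^ (p - 1) * ∫ z in a..b, |g z| ^ p) volume a b :=
    (((continuous_id.sub continuous_const).rpow_const fun _ ↦ Or.inr (by linarith)).mul
      continuous_const).intervalIntegrable a b
  calc ∫ x in a..b, |∫ z in a..x, g z| ^ p
      ≤ ∫ x in a..b, (x - a) ^ (p - 1) * ∫ z in a..b, |g z| ^ p :=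
        intervalIntegral.integral_mono_on hab hlhs hrhs pointwise
    _ = (b - a) ^ p / p * ∫ z in a..b, |g z| ^ p := by
        rw [intervalIntegral.integral_mul_const, integral_sub_rpow_sub_one hp₀]

theorem stmt_9_general (p a b : ℝ) (hp : 1 ≤ p) (hab : a < b) (u g : ℝ → ℝ)
    (hu : ∀ x ∈ Set.Icc a b, u x = ∫ z in a..x, g z)
    (hg : IntervalIntegrable g MeasureTheory.volume a b)
    (hgp : IntervalIntegrable (fun z => |g z| ^ p) MeasureTheory.volume a b) :
    (∫ x in a..b, |u x| ^ p) ^ (1 / p) ≤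
      (b - a) / p ^ (1 / p) * (∫ z in a..b, |g z| ^ p) ^ (1 / p) := by
  have hp₀ : 0 < p := zero_lt_one.trans_le hp
  have hu_eq : ∫ x in a..b, |u x| ^ p = ∫ x in a..b, |∫ z in a..x, g z| ^ p :=
    intervalIntegral.integral_congr fun x hx ↦ by
      rw [uIcc_of_le hab.le] at hx
      simp only [hu x hx]
  have hG : 0 ≤ ∫ z in a..b, |g z| ^ p :=
    intervalIntegral.integral_nonneg hab.le fun z _ ↦ by positivity
  calc (∫ x in a..b, |u x| ^ p) ^ (1 / p)
      ≤ ((b - a) ^ p / p * ∫ z in a..b, |g z| ^ p) ^ (1 / p) := by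
        gcongr
        · exact intervalIntegral.integral_nonneg hab.le fun x _ ↦ by positivity
        · rw [hu_eq]
          exact integral_abs_primitive_rpow_le hp hab.le hg hgp
    _ = (b - a) / p ^ (1 / p) * (∫ z in a..b, |g z| ^ p) ^ (1 / p) := by
        rw [Real.mul_rpow (by have := hab.le; positivity) hG,
          Real.div_rpow (by have := hab.le; positivity) hp₀.le,
          ← Real.rpow_mul (sub_nonneg.2 hab.le), mul_one_div_cancel hp₀.ne', Real.rpow_one]

/-- Sampling inequality on an interval: if `u : [a,b] → ℝ` is absolutely continuous with
`u(a) = u(b) = 0` and derivative `g ∈ Lᵖ(a,b)`, `1 ≤ p < ∞`, then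
`‖u‖_{Lᵖ(a,b)} ≤ (b - a) p^{-1/p} ‖g‖_{Lᵖ(a,b)}`. -/
theorem stmt_9 (p a b : ℝ) (hp : 1 ≤ p) (hab : a < b) (u g : ℝ → ℝ)
    (hu : ∀ x ∈ Set.Icc a b, u x = ∫ z in a..x, g z)
    (hub : u b = 0)
    (hg : IntervalIntegrable g MeasureTheory.volume a b)
    (hgp : IntervalIntegrable (fun z => |g z| ^ p) MeasureTheory.volume a b) :
    (∫ x in a..b, |u x| ^ p) ^ (1 / p) ≤
      (b - a) / p ^ (1 / p) * (∫ z in a..b, |g z| ^ p) ^ (1 / p) :=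
  stmt_9_general p a b hp hab u g hu hg hgp
end

section
/- Let 0 = x_0 < x_1 < ⋯ < x_n = 1, h = max_i (x_i − x_{i-1}), and p ∈ [1,∞). If g : [0,1] → ℝ is absolutely continuous with g′ ∈ L^p(0,1) and g(x_i) = 0 for all i ∈ {0,…,n}, then ‖g‖_{L^p(0,1)} ≤ h / p^{1/p} · ‖g′‖_{L^p(0,1)}. -/
/-!
On a cell `[a, b]` with `g a = 0` we have `g t = ∫_a^t g'`, so Jensen's inequality for `s ↦ s ^ p`
gives `|g t| ^ p ≤ (t - a) ^ (p - 1) ∫_a^b |g'| ^ p`. Integrating the weight `(t - a) ^ (p - 1)`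
over the cell produces the factor `(b - a) ^ p / p ≤ h ^ p / p`, and summing over the cells of the
partition and taking `p`-th roots gives the inequality.
-/

open MeasureTheory intervalIntegral Set

theorem rpow_integral_abs_le {f : ℝ → ℝ} {a b p : ℝ} (hp : 1 ≤ p) (hab : a ≤ b)
    (hf : IntervalIntegrable f volume a b)
    (hfp : IntervalIntegrable (fun z => |f z| ^ p) volume a b) :
    (∫ z in a..b, |f z|) ^ p ≤ (b - a) ^ (p - 1) * ∫ z in a..b, |f z| ^ p := by
  rcases hab.eq_or_lt with rfl | hab
  · simp [Real.zero_rpow (by linarith : p ≠ 0)]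
  have hba : 0 < b - a := by linarith
  have hjensen : (⨍ z in Ioc a b, |f z|) ^ p ≤ ⨍ z in Ioc a b, |f z| ^ p :=
    (convexOn_rpow hp).map_set_average_le
      (continuousOn_id.rpow_const fun _ _ => Or.inr (by linarith)) isClosed_Ici
      (by simp [hab]) (by simp) (.of_forall fun z => abs_nonneg (f z)) hf.1.abs hfp.1
  rw [setAverage_eq, setAverage_eq, Real.volume_real_Ioc_of_le hab.le, smul_eq_mul,
    smul_eq_mul, Real.mul_rpow (inv_nonneg.2 hba.le) (integral_nonneg fun _ => abs_nonneg _),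
    Real.inv_rpow hba.le, ← integral_of_le hab.le, ← integral_of_le hab.le] at hjensen
  have hscaled := mul_le_mul_of_nonneg_left hjensen (Real.rpow_nonneg hba.le p)
  rw [← mul_assoc, mul_inv_cancel₀ (by positivity), one_mul] at hscaled
  refine hscaled.trans_eq ?_
  rw [Real.rpow_sub_one hba.ne']
  field_simp

theorem intervalIntegrable_abs_rpow_of_eq_add_integral {g g' : ℝ → ℝ} {a b p : ℝ} (hp : 0 ≤ p)
    (hab : a ≤ b) (hg : ∀ t ∈ Icc a b, g t = g a + ∫ z in a..t, g' z)
    (hg' : IntervalIntegrable g' volume a b) :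
    IntervalIntegrable (fun t => |g t| ^ p) volume a b := by
  have hprim := continuousOn_primitive_interval' hg' left_mem_uIcc
  rw [uIcc_of_le hab] at hprim
  refine ContinuousOn.intervalIntegrable ?_
  rw [uIcc_of_le hab]
  exact ((continuousOn_const.add hprim).congr hg).abs.rpow_const fun _ _ => Or.inr hp

theorem eq_add_integral_of_mem_Icc {g g' : ℝ → ℝ} {a b c : ℝ}
    (hg : ∀ t ∈ Icc a b, g t = g a + ∫ z in a..t, g' z)
    (hg' : IntervalIntegrable g' volume a b) (hc : c ∈ Icc a b) :
    ∀ t ∈ Icc c b, g t = g c + ∫ z in c..t, g' z := by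
  intro t ht
  have hsub : ∀ s ∈ Icc a b, uIcc a s ⊆ uIcc a b := fun s hs =>
    uIcc_subset_uIcc left_mem_uIcc (mem_uIcc_of_le hs.1 hs.2)
  have hta : t ∈ Icc a b := ⟨hc.1.trans ht.1, ht.2⟩
  rw [← integral_interval_sub_left (hg'.mono_set (hsub t hta)) (hg'.mono_set (hsub c hc)),
    hg t hta, hg c hc]
  ring

theorem integral_abs_rpow_le_of_eq_zero {g g' : ℝ → ℝ} {a b p : ℝ} (hp : 1 ≤ p) (hab : a ≤ b)
    (hg : ∀ t ∈ Icc a b, g t = g a + ∫ z in a..t, g' z) (hga : g a = 0)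
    (hg' : IntervalIntegrable g' volume a b)
    (hg'p : IntervalIntegrable (fun z => |g' z| ^ p) volume a b) :
    ∫ t in a..b, |g t| ^ p ≤ (b - a) ^ p / p * ∫ z in a..b, |g' z| ^ p := by
  have hp0 : 0 < p := by linarith
  have hpt : ∀ t ∈ Icc a b, |g t| ^ p ≤ (t - a) ^ (p - 1) * ∫ z in a..b, |g' z| ^ p := by
    intro t ⟨hat, htb⟩
    have hsub : uIcc a t ⊆ uIcc a b := uIcc_subset_uIcc left_mem_uIcc (mem_uIcc_of_le hat htb)
    calc |g t| ^ p ≤ (∫ z in a..t, |g' z|) ^ p := by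
          rw [hg t ⟨hat, htb⟩, hga, zero_add]
          gcongr
          exact abs_integral_le_integral_abs hat
      _ ≤ (t - a) ^ (p - 1) * ∫ z in a..t, |g' z| ^ p :=
          rpow_integral_abs_le hp hat (hg'.mono_set hsub) (hg'p.mono_set hsub)
      _ ≤ (t - a) ^ (p - 1) * ∫ z in a..b, |g' z| ^ p := by
          gcongr
          exact integral_mono_interval le_rfl hat htb (.of_forall fun z => by positivity) hg'p
  have hgp := intervalIntegrable_abs_rpow_of_eq_add_integral hp0.le hab hg hg'
  have hweight : IntervalIntegrable (fun t => (t - a) ^ (p - 1)) volume a b :=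
    (continuous_id.sub continuous_const |>.rpow_const
      fun _ => Or.inr (by linarith)).intervalIntegrable a b
  calc ∫ t in a..b, |g t| ^ p
      ≤ ∫ t in a..b, (t - a) ^ (p - 1) * ∫ z in a..b, |g' z| ^ p :=
        integral_mono_on hab hgp (hweight.mul_const _) hpt
    _ = (∫ t in a..b, (t - a) ^ (p - 1)) * ∫ z in a..b, |g' z| ^ p := integral_mul_const _ _
    _ = (b - a) ^ p / p * ∫ z in a..b, |g' z| ^ p := by
        rw [integral_comp_sub_right (fun s => s ^ (p - 1)), sub_self,
          integral_rpow (Or.inl (by linarith)), sub_add_cancel, Real.zero_rpow hp0.ne', sub_zero]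

theorem sum_integral_adjacent_intervals_fin {E : Type*} [NormedAddCommGroup E]
    [NormedSpace ℝ E] {μ : Measure ℝ} {f : ℝ → E} :
    ∀ {n : ℕ} {x : Fin (n + 1) → ℝ}, Monotone x →
      IntervalIntegrable f μ (x 0) (x (Fin.last n)) →
      ∑ i : Fin n, ∫ t in x i.castSucc..x i.succ, f t ∂μ = ∫ t in x 0..x (Fin.last n), f t ∂μ
  | 0, x, _, _ => by simp
  | n + 1, x, hx, hf => by
    have hsub : ∀ i j, uIcc (x i) (x j) ⊆ uIcc (x 0) (x (Fin.last (n + 1))) := fun i j =>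
      uIcc_subset_uIcc (mem_uIcc_of_le (hx (Fin.zero_le i)) (hx (Fin.le_last i)))
        (mem_uIcc_of_le (hx (Fin.zero_le j)) (hx (Fin.le_last j)))
    have ih := sum_integral_adjacent_intervals_fin (x := x ∘ Fin.castSucc)
      (hx.comp Fin.strictMono_castSucc.monotone) (hf.mono_set (hsub _ _))
    simp only [Function.comp_apply] at ih
    rw [Fin.sum_univ_castSucc]
    simp only [Fin.succ_castSucc]
    rw [ih, Fin.castSucc_zero, ← Fin.succ_last]
    exact integral_add_adjacent_intervals (hf.mono_set (hsub _ _)) (hf.mono_set (hsub _ _))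

theorem integral_abs_rpow_le_of_eq_zero_at_nodes {n : ℕ} {x : Fin (n + 1) → ℝ} (hx : Monotone x)
    {g g' : ℝ → ℝ} {p h : ℝ} (hp : 1 ≤ p)
    (hg : ∀ t ∈ Icc (x 0) (x (Fin.last n)), g t = g (x 0) + ∫ z in x 0..t, g' z)
    (hg' : IntervalIntegrable g' volume (x 0) (x (Fin.last n)))
    (hg'p : IntervalIntegrable (fun z => |g' z| ^ p) volume (x 0) (x (Fin.last n)))
    (hzero : ∀ i, g (x i) = 0) (hgap : ∀ i : Fin n, x i.succ - x i.castSucc ≤ h) :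
    ∫ t in x 0..x (Fin.last n), |g t| ^ p ≤
      h ^ p / p * ∫ z in x 0..x (Fin.last n), |g' z| ^ p := by
  have hp0 : 0 < p := by linarith
  have hmem : ∀ i, x i ∈ Icc (x 0) (x (Fin.last n)) := fun i =>
    ⟨hx (Fin.zero_le i), hx (Fin.le_last i)⟩
  have hsub : ∀ i j, uIcc (x i) (x j) ⊆ uIcc (x 0) (x (Fin.last n)) := fun i j =>
    uIcc_subset_uIcc (mem_uIcc_of_le (hmem i).1 (hmem i).2) (mem_uIcc_of_le (hmem j).1 (hmem j).2)
  have hgp := intervalIntegrable_abs_rpow_of_eq_add_integral hp0.le (hmem _).2 hg hg'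
  rw [← sum_integral_adjacent_intervals_fin hx hgp, ← sum_integral_adjacent_intervals_fin hx hg'p,
    Finset.mul_sum]
  refine Finset.sum_le_sum fun i _ => ?_
  have hle : x i.castSucc ≤ x i.succ := hx (Fin.castSucc_le_succ i)
  calc ∫ t in x i.castSucc..x i.succ, |g t| ^ p
      ≤ (x i.succ - x i.castSucc) ^ p / p * ∫ z in x i.castSucc..x i.succ, |g' z| ^ p :=
        integral_abs_rpow_le_of_eq_zero hp hle
          (fun t ht => eq_add_integral_of_mem_Icc hg hg' (hmem _) t ⟨ht.1, ht.2.trans (hmem _).2⟩)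
          (hzero _) (hg'.mono_set (hsub _ _)) (hg'p.mono_set (hsub _ _))
    _ ≤ h ^ p / p * ∫ z in x i.castSucc..x i.succ, |g' z| ^ p := by
        gcongr
        · exact integral_nonneg hle fun _ _ => by positivity
        · exact hgap i

/-- Sampling inequality: if `g : [0,1] → ℝ` is absolutely continuous with derivative in
`Lᵖ(0,1)` and vanishes at nodes `0 = x₀ < ⋯ < xₙ = 1` with fill distance `h`, then
`‖g‖_{Lᵖ(0,1)} ≤ h p^{-1/p} ‖g'‖_{Lᵖ(0,1)}`. -/
theorem stmt_10 (n : ℕ) (hn : 0 < n) (p : ℝ) (hp : 1 ≤ p)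
    (x : Fin (n + 1) → ℝ) (hx : StrictMono x) (h0 : x 0 = 0) (h1 : x (Fin.last n) = 1)
    (g g' : ℝ → ℝ)
    (hg : ∀ t ∈ Set.Icc (0:ℝ) 1, g t = g 0 + ∫ z in (0:ℝ)..t, g' z)
    (hg'int : IntervalIntegrable g' MeasureTheory.volume 0 1)
    (hg'p : IntervalIntegrable (fun z => |g' z| ^ p) MeasureTheory.volume 0 1)
    (hzero : ∀ i, g (x i) = 0)
    (h : ℝ)
    (hdef : h = (Finset.univ.sup' (Finset.univ_nonempty_iff.mpr (Fin.pos_iff_nonempty.mp hn))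
      fun i : Fin n => x i.succ - x i.castSucc)) :
    (∫ t in (0:ℝ)..1, |g t| ^ p) ^ (1 / p) ≤
      h / p ^ (1 / p) * (∫ z in (0:ℝ)..1, |g' z| ^ p) ^ (1 / p) := by
  have hp0 : 0 < p := by linarith
  have hgap : ∀ i : Fin n, x i.succ - x i.castSucc ≤ h := fun i =>
    hdef ▸ Finset.le_sup' (fun i : Fin n => x i.succ - x i.castSucc) (Finset.mem_univ i)
  have hh : 0 ≤ h := (sub_nonneg.2 (hx.monotone (Fin.castSucc_le_succ _))).trans (hgap ⟨0, hn⟩)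
  have hbound := integral_abs_rpow_le_of_eq_zero_at_nodes hx.monotone hp
    (by rwa [h0, h1]) (by rwa [h0, h1]) (by rwa [h0, h1]) hzero hgap
  rw [h0, h1] at hbound
  have hg'p0 : 0 ≤ ∫ z in (0:ℝ)..1, |g' z| ^ p :=
    integral_nonneg zero_le_one fun _ _ => by positivity
  calc (∫ t in (0:ℝ)..1, |g t| ^ p) ^ (1 / p)
      ≤ (h ^ p / p * ∫ z in (0:ℝ)..1, |g' z| ^ p) ^ (1 / p) :=
        Real.rpow_le_rpow (integral_nonneg zero_le_one fun _ _ => by positivity) hbound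
          (by positivity)
    _ = h / p ^ (1 / p) * (∫ z in (0:ℝ)..1, |g' z| ^ p) ^ (1 / p) := by
        rw [Real.mul_rpow (by positivity) hg'p0, Real.div_rpow (by positivity) hp0.le,
          ← Real.rpow_mul hh, mul_one_div_cancel hp0.ne', Real.rpow_one]
end

section
/- With K as in the explicit formula (β > 0, Δ = α₀α₁ − α₂² + β(α₀+α₁+2α₂) ≠ 0), for every x ∈ (0,1) the function u = K(x,·) satisfies the boundary condition β u′(1) = −α₁ u(1) − α₂ u(0), where u′(1) is the slope of u on [x, 1]. -/
/-!
On `y ≥ x` the kernel `K(x,·)` is affine with slope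
`s(x) = (x (α₂² - α₀α₁) - (α₁ + α₂) β) / (β Δ)`, and since `x < 1` the slope of `u` on `[x,1]`
must be `s(x)`. The boundary condition `β s(x) = -α₁ K(x,1) - α₂ K(x,0)` is then a polynomial
identity after factoring out `1 / (β Δ)`.
-/

theorem slope_eq_of_affine_eq {a b a' b' p q : ℝ} (hpq : p ≠ q)
    (hp : a * p + b = a' * p + b') (hq : a * q + b = a' * q + b') : a = a' := by
  have h : (a - a') * (p - q) = 0 := by linear_combination hp - hq
  simpa [sub_eq_zero, hpq] using h

section Kernel

variable (α₀ α₁ α₂ β Δ : ℝ)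

noncomputable def kernel (x y : ℝ) : ℝ :=
  1 / (β * Δ) *
    (α₁ * β + β ^ 2 - max x y * (α₁ + α₂) * β +
      min x y * (α₀ * α₁ + α₀ * β - α₂ ^ 2 + α₂ * β) +
      x * y * (α₂ ^ 2 - α₀ * α₁))

noncomputable def kernelSlope (x : ℝ) : ℝ :=
  1 / (β * Δ) * (x * (α₂ ^ 2 - α₀ * α₁) - (α₁ + α₂) * β)

noncomputable def kernelIntercept (x : ℝ) : ℝ :=
  1 / (β * Δ) * (α₁ * β + β ^ 2 + x * (α₀ * α₁ + α₀ * β - α₂ ^ 2 + α₂ * β))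

variable {α₀ α₁ α₂ β Δ}

theorem kernel_of_le {x y : ℝ} (h : x ≤ y) :
    kernel α₀ α₁ α₂ β Δ x y =
      kernelSlope α₀ α₁ α₂ β Δ x * y + kernelIntercept α₀ α₁ α₂ β Δ x := by
  rw [kernel, kernelSlope, kernelIntercept, max_eq_right h, min_eq_left h]
  ring

theorem kernel_zero_right {x : ℝ} (h : 0 ≤ x) :
    kernel α₀ α₁ α₂ β Δ x 0 = 1 / (β * Δ) * (α₁ * β + β ^ 2 - x * (α₁ + α₂) * β) := by
  rw [kernel, max_eq_left h, min_eq_right h]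
  ring

theorem mul_kernelSlope_eq {x : ℝ} (hx0 : 0 ≤ x) (hx1 : x ≤ 1) :
    β * kernelSlope α₀ α₁ α₂ β Δ x =
      -α₁ * kernel α₀ α₁ α₂ β Δ x 1 - α₂ * kernel α₀ α₁ α₂ β Δ x 0 := by
  rw [kernel_of_le hx1, kernel_zero_right hx0, kernelSlope, kernelIntercept]
  ring

end Kernel

theorem stmt_16_general (α₀ α₁ α₂ β : ℝ)
    (Δ : ℝ)
    (K : ℝ → ℝ → ℝ)
    (hK : ∀ x y : ℝ, K x y = 1 / (β * Δ) *
      (α₁ * β + β ^ 2 - max x y * (α₁ + α₂) * β +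
        min x y * (α₀ * α₁ + α₀ * β - α₂ ^ 2 + α₂ * β) +
        x * y * (α₂ ^ 2 - α₀ * α₁)))
    (x : ℝ) (hx : x ∈ Set.Ioo (0:ℝ) 1) (a₂ b₂ : ℝ)
    (hright : ∀ y ∈ Set.Icc x 1, K x y = a₂ * y + b₂) :
    β * a₂ = -α₁ * K x 1 - α₂ * K x 0 := by
  obtain ⟨hx0, hx1⟩ := hx
  obtain rfl : K = kernel α₀ α₁ α₂ β Δ := funext₂ hK
  have hslope : a₂ = kernelSlope α₀ α₁ α₂ β Δ x := by
    refine slope_eq_of_affine_eq hx1.ne (b := b₂) (b' := kernelIntercept α₀ α₁ α₂ β Δ x) ?_ ?_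
    · rw [← hright x ⟨le_rfl, hx1.le⟩, kernel_of_le le_rfl]
    · rw [← hright 1 ⟨hx1.le, le_rfl⟩, kernel_of_le hx1.le]
  rw [hslope, mul_kernelSlope_eq hx0.le hx1.le]

/-- Right boundary condition for the explicit kernel: for every `x ∈ (0,1)` the function
`u = K(x,·)` satisfies `β u'(1) = -α₁ u(1) - α₂ u(0)`, where `u'(1)` is the slope of `u`
on `[x,1]`. -/
theorem stmt_16 (α₀ α₁ α₂ β : ℝ) (hβ : 0 < β)
    (Δ : ℝ) (hΔ : Δ = α₀ * α₁ - α₂ ^ 2 + β * (α₀ + α₁ + 2 * α₂)) (hΔne : Δ ≠ 0)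
    (K : ℝ → ℝ → ℝ)
    (hK : ∀ x y : ℝ, K x y = 1 / (β * Δ) *
      (α₁ * β + β ^ 2 - max x y * (α₁ + α₂) * β +
        min x y * (α₀ * α₁ + α₀ * β - α₂ ^ 2 + α₂ * β) +
        x * y * (α₂ ^ 2 - α₀ * α₁)))
    (x : ℝ) (hx : x ∈ Set.Ioo (0:ℝ) 1) (a₂ b₂ : ℝ)
    (hright : ∀ y ∈ Set.Icc x 1, K x y = a₂ * y + b₂) :
    β * a₂ = -α₁ * K x 1 - α₂ * K x 0 :=
  stmt_16_general α₀ α₁ α₂ β Δ K hK x hx a₂ b₂ hright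
end

section
/- Let f : [0,1] → ℝ be α-Hölder continuous with constant H (|f(x) − f(y)| ≤ H|x−y|^α, α ∈ (0,1]), and let T_n(f) = (1/n) ∑_{i=1}^n (f((i−1)/n) + f(i/n))/2 be the trapezoidal rule on the uniform grid. Then |∫₀¹ f(x) dx − T_n(f)| ≤ H / ((1+α) 2^α) · n^{−α}. -/
/-! Split `[a, b]` at its midpoint `m`. The local trapezoid error is
`∫_a^m (f t - f a) + ∫_m^b (f t - f b)`, and the Hölder bound `|f t - f a| ≤ H (t - a)^α`
integrates to `H (m - a)^(1+α) / (1+α)`, likewise on the right half; the two halves give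
`H h^(1+α) / ((1+α) 2^α)` on a cell of length `h`. Summing over the `n` cells of length `1/n`
gives `n · H n^(-1-α) / ((1+α) 2^α)`. -/

open Set Filter Topology MeasureTheory intervalIntegral

lemma continuousOn_of_abs_sub_le_mul_rpow {f : ℝ → ℝ} {s : Set ℝ} {α H : ℝ} (hα : 0 < α)
    (h : ∀ x ∈ s, ∀ y ∈ s, |f x - f y| ≤ H * |x - y| ^ α) : ContinuousOn f s := by
  intro x hx
  rw [ContinuousWithinAt, tendsto_iff_norm_sub_tendsto_zero]
  refine squeeze_zero' (.of_forall fun _ => norm_nonneg _)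
    (eventually_nhdsWithin_of_forall fun y hy => h y hy x hx) ?_
  have : Tendsto (fun y => H * |y - x| ^ α) (𝓝[s] x) (𝓝 (H * |x - x| ^ α)) :=
    ((continuous_const.mul ((continuous_id.sub continuous_const).abs.rpow_const
      fun _ => Or.inr hα.le)).tendsto x).mono_left nhdsWithin_le_nhds
  simpa [Real.zero_rpow hα.ne'] using this

lemma integral_rpow_sub_const {a b α : ℝ} (hα : -1 < α) :
    ∫ t in a..b, (t - a) ^ α = (b - a) ^ (α + 1) / (α + 1) := by
  rw [integral_comp_sub_right (· ^ α), integral_rpow (.inl hα), sub_self,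
    Real.zero_rpow (by linarith), sub_zero]

lemma integral_rpow_const_sub {a b α : ℝ} (hα : -1 < α) :
    ∫ t in a..b, (b - t) ^ α = (b - a) ^ (α + 1) / (α + 1) := by
  rw [integral_comp_sub_left (· ^ α), integral_rpow (.inl hα), sub_self,
    Real.zero_rpow (by linarith), sub_zero]

section

variable {f : ℝ → ℝ} {a b α H : ℝ}

lemma abs_integral_sub_left_endpoint_le (hab : a ≤ b) (hα : -1 < α)
    (h : ∀ t ∈ Ioc a b, |f t - f a| ≤ H * (t - a) ^ α) :
    |∫ t in a..b, (f t - f a)| ≤ H * (b - a) ^ (α + 1) / (α + 1) := by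
  have hg : IntervalIntegrable (fun t => H * (t - a) ^ α) volume a b := by
    simpa using ((intervalIntegrable_rpow' (a := 0) (b := b - a) hα).comp_sub_right a).const_mul H
  calc |∫ t in a..b, (f t - f a)| ≤ ∫ t in a..b, H * (t - a) ^ α :=
        norm_integral_le_of_norm_le (f := fun t => f t - f a) hab (.of_forall h) hg
    _ = H * (b - a) ^ (α + 1) / (α + 1) := by
        rw [intervalIntegral.integral_const_mul, integral_rpow_sub_const hα, mul_div_assoc]

lemma abs_integral_sub_right_endpoint_le (hab : a ≤ b) (hα : -1 < α)
    (h : ∀ t ∈ Ioc a b, |f t - f b| ≤ H * (b - t) ^ α) :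
    |∫ t in a..b, (f t - f b)| ≤ H * (b - a) ^ (α + 1) / (α + 1) := by
  have hg : IntervalIntegrable (fun t => H * (b - t) ^ α) volume a b := by
    simpa using ((intervalIntegrable_rpow' (a := b - a) (b := 0) hα).comp_sub_left b).const_mul H
  calc |∫ t in a..b, (f t - f b)| ≤ ∫ t in a..b, H * (b - t) ^ α :=
        norm_integral_le_of_norm_le (f := fun t => f t - f b) hab (.of_forall h) hg
    _ = H * (b - a) ^ (α + 1) / (α + 1) := by
        rw [intervalIntegral.integral_const_mul, integral_rpow_const_sub hα, mul_div_assoc]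

lemma abs_integral_sub_trapezoid_le (hf : IntervalIntegrable f volume a b) (hab : a ≤ b)
    (hα : -1 < α) (h : ∀ x ∈ Icc a b, ∀ y ∈ Icc a b, |f x - f y| ≤ H * |x - y| ^ α) :
    |(∫ t in a..b, f t) - (b - a) * (f a + f b) / 2| ≤
      H * (b - a) ^ (1 + α) / ((1 + α) * 2 ^ α) := by
  set m := (a + b) / 2 with hm
  have ham : a ≤ m := by linarith
  have hmb : m ≤ b := by linarith
  have hf₁ : IntervalIntegrable f volume a m :=
    hf.mono_set (uIcc_subset_uIcc_left (by rw [uIcc_of_le hab]; exact ⟨ham, hmb⟩))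
  have hf₂ : IntervalIntegrable f volume m b :=
    hf.mono_set (uIcc_subset_uIcc_right (by rw [uIcc_of_le hab]; exact ⟨ham, hmb⟩))
  have hL := abs_integral_sub_left_endpoint_le (f := f) (H := H) ham hα fun t ht => by
    simpa [abs_of_pos (sub_pos.2 ht.1)] using
      h t ⟨ht.1.le, ht.2.trans hmb⟩ a ⟨le_rfl, hab⟩
  have hR := abs_integral_sub_right_endpoint_le (f := f) (H := H) hmb hα fun t ht => by
    simpa [abs_sub_comm t b, abs_of_nonneg (sub_nonneg.2 ht.2)] using
      h t ⟨ham.trans ht.1.le, ht.2⟩ b ⟨hab, le_rfl⟩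
  have hsplit : (∫ t in a..b, f t) - (b - a) * (f a + f b) / 2 =
      (∫ t in a..m, (f t - f a)) + ∫ t in m..b, (f t - f b) := by
    rw [integral_sub hf₁ intervalIntegrable_const, integral_sub hf₂ intervalIntegrable_const,
      intervalIntegral.integral_const, intervalIntegral.integral_const,
      ← integral_add_adjacent_intervals hf₁ hf₂, smul_eq_mul, smul_eq_mul]
    ring
  have hm₁ : m - a = (b - a) / 2 := by ring
  have hm₂ : b - m = (b - a) / 2 := by ring
  rw [hm₁] at hL
  rw [hm₂] at hR
  have h2 : ((b - a) / 2) ^ (α + 1) = (b - a) ^ (α + 1) / (2 ^ α * 2) := by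
    rw [Real.div_rpow (by linarith) zero_le_two, Real.rpow_add_one two_ne_zero]
  calc |(∫ t in a..b, f t) - (b - a) * (f a + f b) / 2|
      ≤ |∫ t in a..m, (f t - f a)| + |∫ t in m..b, (f t - f b)| := hsplit ▸ abs_add_le _ _
    _ ≤ 2 * (H * ((b - a) / 2) ^ (α + 1) / (α + 1)) := by linarith
    _ = H * (b - a) ^ (1 + α) / ((1 + α) * 2 ^ α) := by
        rw [h2, add_comm α 1]
        field_simp

end

/-- Trapezoidal rule error for Hölder continuous functions: if `f` is `α`-Hölder with
constant `H` on `[0,1]`, then the uniform-grid trapezoidal rule satisfies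
`|∫₀¹ f - Tₙ(f)| ≤ H / ((1+α) 2^α) · n^{-α}`. -/
theorem stmt_17 (f : ℝ → ℝ) (α H : ℝ) (hα : α ∈ Set.Ioc (0:ℝ) 1)
    (hH : ∀ x ∈ Set.Icc (0:ℝ) 1, ∀ y ∈ Set.Icc (0:ℝ) 1, |f x - f y| ≤ H * |x - y| ^ α)
    (n : ℕ) (hn : 0 < n) :
    |(∫ t in (0:ℝ)..1, f t) -
        ∑ i ∈ Finset.range n, (f (i / n) + f ((i + 1) / n)) / (2 * n)| ≤
      H / ((1 + α) * 2 ^ α) * (n : ℝ) ^ (-α) := by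
  have hn' : (0 : ℝ) < n := Nat.cast_pos.2 hn
  set x : ℕ → ℝ := fun i => i / n with hx
  have hx_succ (i : ℕ) : x (i + 1) = (i + 1) / n := by simp [hx]
  have hsub {i : ℕ} (hi : i < n) : Icc (x i) (x (i + 1)) ⊆ Icc 0 1 :=
    Icc_subset_Icc (by positivity) (by rw [hx_succ, div_le_one hn']; exact_mod_cast hi)
  have hle (i : ℕ) : x i ≤ x (i + 1) := by
    rw [hx_succ]; exact div_le_div_of_nonneg_right (by linarith) hn'.le
  have hf := continuousOn_of_abs_sub_le_mul_rpow hα.1 hH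
  have hint (i : ℕ) (hi : i < n) : IntervalIntegrable f volume (x i) (x (i + 1)) :=
    (hf.mono ((uIcc_of_le (hle i)).trans_subset (hsub hi))).intervalIntegrable
  have hlocal (i : ℕ) (hi : i < n) := abs_integral_sub_trapezoid_le (hint i hi) (hle i)
    (by linarith [hα.1]) fun y hy z hz => hH y (hsub hi hy) z (hsub hi hz)
  have hstep (i : ℕ) : x (i + 1) - x i = 1 / n := by rw [hx_succ, hx]; ring
  have h01 : (∫ t in (0:ℝ)..1, f t) = ∫ t in x 0..x n, f t := by simp [hx, hn'.ne']
  rw [h01, ← sum_integral_adjacent_intervals hint, ← Finset.sum_sub_distrib]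
  calc _ ≤ ∑ i ∈ Finset.range n, |(∫ t in x i..x (i + 1), f t) -
          (x (i + 1) - x i) * (f (x i) + f (x (i + 1))) / 2| := by
        refine (Finset.abs_sum_le_sum_abs _ _).trans_eq (Finset.sum_congr rfl fun i _ => ?_)
        rw [hstep, hx_succ, hx]
        ring_nf
    _ ≤ ∑ _i ∈ Finset.range n, H * (1 / n) ^ (1 + α) / ((1 + α) * 2 ^ α) :=
        Finset.sum_le_sum fun i hi => hstep i ▸ hlocal i (Finset.mem_range.1 hi)
    _ = H / ((1 + α) * 2 ^ α) * (n : ℝ) ^ (-α) := by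
        rw [Finset.sum_const, Finset.card_range, nsmul_eq_mul, one_div, Real.inv_rpow hn'.le,
          Real.rpow_add hn', Real.rpow_one, Real.rpow_neg hn'.le]
        field_simp
end
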